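/- Let Γ be a connected k-regular graph on v vertices that has an eigenvalue λ with multiplicity m and corresponding spectral idempotent E_λ, and let ℰ = ⟨J, E_λ⟩∘. If dim ℰ = 2, then Γ has a full indubitable partition corresponding to λ (namely an indubitable partition with m+1 cells and parameters (a,b) with a − b = λ, i.e., a = λ + (k−λ)/(m+1) and b = (k−λ)/(m+1)). -/

import Mathlib

open Matrix Finset Kronecker SimpleGraph

/-- The all-ones matrix `J`. -/
def matJ (α β : Type*) : Matrix α β ℝ := Matrix.of fun _ _ => 1

/-- Hadamard (entrywise) powers of a matrix; the 0-th power is the all-ones matrix `J`. -/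
def hadPow {V : Type*} (E : Matrix V V ℝ) : ℕ → Matrix V V ℝ
  | 0 => matJ V V
  | n + 1 => Matrix.hadamard E (hadPow E n)

/-- The idempotent `∘`-algebra `⟨J, E⟩∘`: the linear span over `ℝ` of `J` together with all
Hadamard powers `E, E∘E, E∘E∘E, …` of `E`. -/
noncomputable def hadSpan {V : Type*} (E : Matrix V V ℝ) : Submodule ℝ (Matrix V V ℝ) :=
  Submodule.span ℝ (Set.range (hadPow E))

/-- The adjacency algebra of a graph with adjacency matrix `A`:
the linear span over `ℝ` of the powers `I, A, A², …` of `A`. -/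
noncomputable def adjAlg {V : Type*} [Fintype V] [DecidableEq V] (A : Matrix V V ℝ) :
    Submodule ℝ (Matrix V V ℝ) :=
  Submodule.span ℝ (Set.range fun n : ℕ => A ^ n)

/-- `A` and `B` are permutation-similar: `B = PᵀAP` for a permutation matrix `P`,
i.e. `A` can be obtained from `B` by simultaneous re-indexing of rows and columns
along a bijection of the index types. -/
def PermSimilar {α β : Type*} (A : Matrix α α ℝ) (B : Matrix β β ℝ) : Prop :=
  ∃ e : α ≃ β, ∀ i j, A i j = B (e i) (e j)

/-- The multiplicity of `μ` as an eigenvalue of the square matrix `A`, i.e. the dimension of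
the eigenspace `ker (μ•I − A)`. -/
noncomputable def eigMult {V : Type*} [Fintype V] [DecidableEq V]
    (A : Matrix V V ℝ) (μ : ℝ) : ℕ :=
  Module.finrank ℝ (LinearMap.ker (Matrix.toLin' (μ • (1 : Matrix V V ℝ) - A)))

/-- `E` is the spectral idempotent of `A` for the eigenvalue `μ`: the real symmetric matrix
with `E² = E`, `A·E = μ·E`, and `rank E = dim ker (μI − A)`; equivalently, the matrix of the
orthogonal projection onto the eigenspace `ker (μI − A)`. -/
def IsSpectralIdempotent {V : Type*} [Fintype V] [DecidableEq V]
    (A E : Matrix V V ℝ) (μ : ℝ) : Prop :=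
  E.IsSymm ∧ E * E = E ∧ A * E = μ • E ∧ E.rank = eigMult A μ

open Classical in
/-- The map `c` describes an indubitable partition of `G` with parameters `(a, b)`:
the cells of the partition are the fibers of `c`, and for each cell `P` and each vertex `x`
the number of neighbors of `x` in `P` equals `a` if `x ∈ P` and `b` otherwise. -/
def IsIndubitable {V ι : Type*} (G : SimpleGraph V) (c : V → ι) (a b : ℕ) : Prop :=
  Function.Surjective c ∧
    ∀ (i : ι) (x : V), {y : V | G.Adj x y ∧ c y = i}.ncard = if c x = i then a else b

/-- `G` has a full indubitable partition corresponding to the eigenvalue `μ` of multiplicity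
`m`: an indubitable partition with `m + 1` cells and parameters `(a, b)` with `a − b = μ`. -/
def HasFullIndubitable {V : Type*} (G : SimpleGraph V) (μ : ℝ) (m : ℕ) : Prop :=
  ∃ (c : V → Fin (m + 1)) (a b : ℕ), IsIndubitable G c a b ∧ (a : ℝ) - (b : ℝ) = μ

instance {α β : Type*} [DecidableEq α] [DecidableEq β] (G : SimpleGraph α) (H : SimpleGraph β)
    [DecidableRel G.Adj] [DecidableRel H.Adj] : DecidableRel (G □ H).Adj := fun x y =>
  inferInstanceAs (Decidable ((G.Adj x.1 y.1 ∧ x.2 = y.2) ∨ (H.Adj x.2 y.2 ∧ x.1 = y.1)))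


/-!
Since `⟨J, E⟩∘` is two-dimensional and contains `J` and `E`, the Hadamard square `E ∘ E` is a
combination of `E` and `J`, so the entries of `E` take exactly two values `p > q`. The eigenvalue
`λ` differs from `k` (otherwise the columns of `E` would be constant by connectivity), so `E`
kills the all-ones vector. Together with `E = E² = Eᵀ` this forces `E x x = p`, makes the rows
of `x` and `y` equal whenever `E x y = p`, and gives `v q = -1` and `s (p - q) = 1` for the number
`s` of entries `p` in any row. Hence `E x y = p` is an equivalence relation with
`v / s = v (p - q) = tr E + 1 = m + 1` classes. Finally `A E = λ E` reads
`λ E x z = k q + (p - q) · #{y ∼ x | E y z = p}`, so the number of neighbours of `x` in the class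
of `z` only depends on whether `E x z = p`.
-/

section HadamardSpan

variable {n : Type*} {E : Matrix n n ℝ}

theorem hadPow_one (E : Matrix n n ℝ) : hadPow E 1 = E := by
  ext x y
  simp [hadPow, matJ]

theorem hadPow_two (E : Matrix n n ℝ) : hadPow E 2 = E ⊙ E := by
  rw [hadPow, hadPow_one]

theorem hadPow_smul_matJ (c : ℝ) (k : ℕ) : hadPow (c • matJ n n) k = c ^ k • matJ n n := by
  induction k with
  | zero => simp [hadPow]
  | succ k ih =>
    rw [hadPow, ih]
    ext x y
    simp [matJ, pow_succ, mul_comm]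

theorem exists_apply_ne_of_one_lt_finrank_hadSpan [Fintype n]
    (h : 1 < Module.finrank ℝ (hadSpan E)) : ∃ x y x' y', E x y ≠ E x' y' := by
  by_contra! hconst
  obtain ⟨c, rfl⟩ : ∃ c : ℝ, E = c • matJ n n := by
    rcases isEmpty_or_nonempty n with hn | ⟨⟨x₀⟩⟩
    · exact ⟨0, Subsingleton.elim _ _⟩
    · exact ⟨E x₀ x₀, by ext x y; simp [matJ, hconst x y x₀ x₀]⟩
  have hle : hadSpan (c • matJ n n) ≤ Submodule.span ℝ {matJ n n} := by
    rw [hadSpan, Submodule.span_le]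
    rintro _ ⟨k, rfl⟩
    rw [hadPow_smul_matJ]
    exact Submodule.smul_mem _ _ (Submodule.mem_span_singleton_self _)
  have hJ : Module.finrank ℝ (Submodule.span ℝ {matJ n n}) ≤ 1 :=
    (finrank_span_le_card _).trans (by simp)
  have := Submodule.finrank_mono hle
  omega

theorem hadamard_self_mem_span_pair [Fintype n] (hdim : Module.finrank ℝ (hadSpan E) = 2)
    {x₁ y₁ x₂ y₂ : n} (hne : E x₁ y₁ ≠ E x₂ y₂) :
    E ⊙ E ∈ Submodule.span ℝ {E, matJ n n} := by
  have hle : Submodule.span ℝ {E, matJ n n} ≤ hadSpan E := by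
    rw [Submodule.span_le, Set.insert_subset_iff, Set.singleton_subset_iff]
    exact ⟨Submodule.subset_span ⟨1, hadPow_one E⟩, Submodule.subset_span ⟨0, rfl⟩⟩
  have hindep : LinearIndependent ℝ ![E, matJ n n] := by
    refine LinearIndependent.pair_iff.mpr fun s t hst => ?_
    have hentry : ∀ x y, s * E x y + t = 0 := fun x y => by
      simpa [matJ] using congrFun (congrFun hst x) y
    have hs : s = 0 := by
      by_contra hs
      exact hne (mul_left_cancel₀ hs (by linarith [hentry x₁ y₁, hentry x₂ y₂]))
    exact ⟨hs, by simpa [hs] using hentry x₁ y₁⟩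
  have heq : Submodule.span ℝ {E, matJ n n} = hadSpan E := by
    refine Submodule.eq_of_le_of_finrank_le hle ?_
    rw [hdim, ← Matrix.range_cons_cons_empty, finrank_span_eq_card hindep, Fintype.card_fin]
  rw [heq, ← hadPow_two]
  exact Submodule.subset_span ⟨2, rfl⟩

theorem apply_eq_or_eq_of_hadamard_self_mem_span_pair
    (h : E ⊙ E ∈ Submodule.span ℝ {E, matJ n n}) {x₁ y₁ x₂ y₂ : n} (hne : E x₁ y₁ ≠ E x₂ y₂)
    (x y : n) : E x y = E x₁ y₁ ∨ E x y = E x₂ y₂ := by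
  obtain ⟨β, α, hβα⟩ := Submodule.mem_span_pair.mp h
  have hquad : ∀ x y, E x y * E x y = β * E x y + α := fun x y => by
    simpa [matJ] using (congrFun (congrFun hβα x) y).symm
  -- `E x₁ y₁` and `E x₂ y₂` are the two roots of `t² - β t - α`, so `β` is their sum.
  have hβ : β = E x₁ y₁ + E x₂ y₂ := by
    have : (E x₁ y₁ - E x₂ y₂) * (E x₁ y₁ + E x₂ y₂ - β) = 0 := by
      linear_combination hquad x₁ y₁ - hquad x₂ y₂
    linarith [(mul_eq_zero.mp this).resolve_left (sub_ne_zero.mpr hne)]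
  have : (E x y - E x₁ y₁) * (E x y - E x₂ y₂) = 0 := by
    linear_combination hquad x y - hquad x₁ y₁ + (E x y - E x₁ y₁) * hβ
  exact (mul_eq_zero.mp this).imp sub_eq_zero.mp sub_eq_zero.mp

theorem exists_two_valued_of_finrank_hadSpan_eq_two [Fintype n]
    (hdim : Module.finrank ℝ (hadSpan E) = 2) :
    ∃ p q : ℝ, q < p ∧ (∀ x y, E x y = p ∨ E x y = q) ∧ (∃ x y, E x y = p) ∧
      ∃ x y, E x y = q := by
  obtain ⟨x₁, y₁, x₂, y₂, hne⟩ := exists_apply_ne_of_one_lt_finrank_hadSpan (E := E) (by omega)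
  have hval := apply_eq_or_eq_of_hadamard_self_mem_span_pair
    (hadamard_self_mem_span_pair hdim hne) hne
  rcases hne.lt_or_gt with hlt | hgt
  · exact ⟨_, _, hlt, fun x y => (hval x y).symm, ⟨x₂, y₂, rfl⟩, ⟨x₁, y₁, rfl⟩⟩
  · exact ⟨_, _, hgt, hval, ⟨x₁, y₁, rfl⟩, ⟨x₂, y₂, rfl⟩⟩

end HadamardSpan

theorem Finset.sum_comp_of_forall_eq_or_eq {ι : Type*} (s : Finset ι) {f : ι → ℝ} {p q : ℝ}
    (hf : ∀ i, f i = p ∨ f i = q) (g : ℝ → ℝ) :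
    ∑ i ∈ s, g (f i) = #s * g q + (g p - g q) * #{i ∈ s | f i = p} := by
  have hsplit : ∀ i, g (f i) = g q + (g p - g q) * if f i = p then 1 else 0 := fun i => by
    rcases hf i with h | h <;> by_cases hp : f i = p <;> simp_all
  simp only [hsplit, Finset.sum_add_distrib, ← Finset.mul_sum, Finset.sum_boole,
    Finset.sum_const, nsmul_eq_mul]

theorem Equivalence.exists_surjective_fin_iff_of_card_eq_mul {α : Type*} [Fintype α]
    {R : α → α → Prop} [DecidableRel R] (hR : Equivalence R) {s N : ℕ}
    (hs : ∀ x, #{y | R x y} = s) (hs0 : 0 < s)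
    (hcard : Fintype.card α = N * s) :
    ∃ c : α → Fin N, Function.Surjective c ∧ ∀ x y, c x = c y ↔ R x y := by
  classical
  let r : Setoid α := ⟨R, hR⟩
  have hfiber : ∀ i : Quotient r, #{x | Quotient.mk r x = i} = s := by
    rintro ⟨z⟩
    rw [← hs z]
    congr 1
    ext x
    simp only [mem_filter, mem_univ, true_and]
    exact (Quotient.eq (r := r)).trans ⟨hR.symm, hR.symm⟩
  have hQ : Fintype.card (Quotient r) = N := by
    have := Finset.card_eq_sum_card_fiberwise (s := univ) (t := univ) (f := Quotient.mk r)
      fun _ _ => mem_univ _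
    rw [Finset.sum_congr rfl fun i _ => hfiber i, sum_const, card_univ, card_univ,
      smul_eq_mul, hcard] at this
    exact (Nat.eq_of_mul_eq_mul_right hs0 this).symm
  let e := Fintype.equivFinOfCardEq hQ
  exact ⟨e ∘ Quotient.mk r, e.surjective.comp Quotient.mk_surjective,
    fun x y => e.injective.eq_iff.trans Quotient.eq⟩

namespace Matrix

theorem trace_eq_rank_of_isIdempotentElem {n K : Type*} [Fintype n] [DecidableEq n] [Field K]
    {E : Matrix n n K} (hE : IsIdempotentElem E) : E.trace = E.rank := by
  have h : IsIdempotentElem (toLin' E) := hE.map toLinAlgEquiv'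
  rw [← trace_toLin'_eq, ((LinearMap.isProj_range_iff_isIdempotentElem _).mpr h).trace, rank,
    toLin'_apply']

section SymmIdempotent

variable {n : Type*} [Fintype n] {E : Matrix n n ℝ}

theorem sum_apply_mul_apply_of_idem (hsymm : E.IsSymm) (hidem : E * E = E) (x y : n) :
    ∑ w, E x w * E y w = E x y := by
  conv_rhs => rw [← hidem, mul_apply]
  simp_rw [hsymm.apply y]

theorem apply_self_nonneg_of_idem (hsymm : E.IsSymm) (hidem : E * E = E) (x : n) :
    0 ≤ E x x := by
  rw [← sum_apply_mul_apply_of_idem hsymm hidem]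
  exact Finset.sum_nonneg fun w _ => mul_self_nonneg _

theorem sum_sub_sq_of_idem (hsymm : E.IsSymm) (hidem : E * E = E) (x y : n) :
    ∑ w, (E x w - E y w) ^ 2 = E x x - 2 * E x y + E y y := by
  simp_rw [sub_sq, Finset.sum_add_distrib, Finset.sum_sub_distrib, sq, mul_assoc,
    ← Finset.mul_sum, sum_apply_mul_apply_of_idem hsymm hidem]

end SymmIdempotent

section TwoValued

variable {n : Type*} [Fintype n] {E : Matrix n n ℝ} {p q : ℝ}

theorem card_mul_add_card_filter_mul_eq_zero (hval : ∀ x y, E x y = p ∨ E x y = q)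
    (hrow : ∀ x, ∑ y, E x y = 0) (x : n) :
    Fintype.card n * q + (p - q) * #{y | E x y = p} = 0 := by
  simpa using (Finset.sum_comp_of_forall_eq_or_eq univ (hval x) id).symm.trans (hrow x)

theorem apply_self_eq_of_two_valued (hsymm : E.IsSymm) (hidem : E * E = E)
    (hval : ∀ x y, E x y = p ∨ E x y = q) (hqp : q < p) (hrow : ∀ x, ∑ y, E x y = 0)
    (hp : ∃ x y, E x y = p) (x : n) : E x x = p := by
  refine (hval x x).resolve_right fun hxx => ?_
  have hq : 0 ≤ q := hxx ▸ apply_self_nonneg_of_idem hsymm hidem x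
  -- If `q ≥ 0`, all entries are nonnegative with zero row sums, so `E = 0`.
  have hzero : ∀ x y, E x y = 0 := fun x y =>
    (Finset.sum_eq_zero_iff_of_nonneg fun w _ => by rcases hval x w with h | h <;> linarith).mp
      (hrow x) y (mem_univ y)
  obtain ⟨x', y', hp⟩ := hp
  linarith [hzero x' y']

theorem apply_eq_of_apply_eq_apply_self (hsymm : E.IsSymm) (hidem : E * E = E) {x y : n}
    (hxy : E x y = E x x) (hyy : E y y = E x x) (z : n) : E x z = E y z := by
  have hsum : ∑ w, (E x w - E y w) ^ 2 = 0 := by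
    rw [sum_sub_sq_of_idem hsymm hidem, hxy, hyy]
    ring
  have := (Finset.sum_eq_zero_iff_of_nonneg fun w _ => sq_nonneg (E x w - E y w)).mp hsum z
    (mem_univ z)
  exact sub_eq_zero.mp (pow_eq_zero_iff two_ne_zero |>.mp this)

theorem equivalence_apply_eq (hsymm : E.IsSymm) (hidem : E * E = E)
    (hdiag : ∀ x, E x x = p) : Equivalence fun x y => E x y = p where
  refl := hdiag
  symm {x y} h := hsymm.apply x y ▸ h
  trans {x y z} hxy hyz := by
    rwa [apply_eq_of_apply_eq_apply_self hsymm hidem (hxy.trans (hdiag x).symm)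
      ((hdiag y).trans (hdiag x).symm)]

theorem card_filter_mul_sub_eq_one (hsymm : E.IsSymm) (hidem : E * E = E)
    (hval : ∀ x y, E x y = p ∨ E x y = q) (hqp : q < p) (hrow : ∀ x, ∑ y, E x y = 0)
    (hdiag : ∀ x, E x x = p) (hq : ∃ x y, E x y = q) (x : n) :
    (#{y | E x y = p} : ℝ) * (p - q) = 1 := by
  have hp0 : p ≠ 0 := by
    rintro rfl
    obtain ⟨x', y', hq⟩ := hq
    have hsum : ∑ w, E x' w * E x' w = 0 := by
      rw [sum_apply_mul_apply_of_idem hsymm hidem, hdiag]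
    have := (Finset.sum_eq_zero_iff_of_nonneg fun w _ => mul_self_nonneg (E x' w)).mp hsum y'
      (mem_univ y')
    rw [hq, mul_self_eq_zero] at this
    exact hqp.ne this
  have hsq : Fintype.card n * (q * q) + (p * p - q * q) * #{y | E x y = p} = p := by
    have := Finset.sum_comp_of_forall_eq_or_eq univ (hval x) fun t => t * t
    rw [sum_apply_mul_apply_of_idem hsymm hidem, hdiag] at this
    simpa using this.symm
  have hlin := card_mul_add_card_filter_mul_eq_zero hval hrow x
  have : p * ((#{y | E x y = p} : ℝ) * (p - q) - 1) = 0 := by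
    linear_combination hsq - q * hlin
  exact sub_eq_zero.mp ((mul_eq_zero.mp this).resolve_left hp0)

theorem card_mul_eq_neg_one (hsymm : E.IsSymm) (hidem : E * E = E)
    (hval : ∀ x y, E x y = p ∨ E x y = q) (hqp : q < p) (hrow : ∀ x, ∑ y, E x y = 0)
    (hdiag : ∀ x, E x x = p) (hq : ∃ x y, E x y = q) : (Fintype.card n : ℝ) * q = -1 := by
  have ⟨x, _⟩ := hq
  linear_combination card_mul_add_card_filter_mul_eq_zero hval hrow x -
    card_filter_mul_sub_eq_one hsymm hidem hval hqp hrow hdiag hq x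

theorem exists_surjective_fin_iff_apply_eq (hsymm : E.IsSymm) (hidem : E * E = E)
    (hval : ∀ x y, E x y = p ∨ E x y = q) (hqp : q < p) (hrow : ∀ x, ∑ y, E x y = 0)
    (hdiag : ∀ x, E x x = p) (hq : ∃ x y, E x y = q) {m : ℕ}
    (hm : (Fintype.card n : ℝ) * p = m) :
    ∃ c : n → Fin (m + 1), Function.Surjective c ∧ ∀ x y, c x = c y ↔ E x y = p := by
  have ⟨x₀, _⟩ := hq
  let _ : DecidableRel fun x y => E x y = p := fun x y => inferInstance
  have hcell := card_filter_mul_sub_eq_one hsymm hidem hval hqp hrow hdiag hq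
  have hcell_eq : ∀ x, #{y | E x y = p} = #{y | E x₀ y = p} := fun x => by
    exact_mod_cast mul_right_cancel₀ (sub_ne_zero.mpr hqp.ne') ((hcell x).trans (hcell x₀).symm)
  have hcell_pos : 0 < #{y | E x₀ y = p} := card_pos.mpr ⟨x₀, by simp [hdiag]⟩
  have hcard : Fintype.card n = (m + 1) * #{y | E x₀ y = p} := by
    have hvq := card_mul_eq_neg_one hsymm hidem hval hqp hrow hdiag hq
    have : (Fintype.card n : ℝ) = (m + 1) * #{y | E x₀ y = p} := by
      linear_combination (-(Fintype.card n : ℝ)) * hcell x₀ + #{y | E x₀ y = p} * (hm - hvq)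
    exact_mod_cast this
  exact (equivalence_apply_eq hsymm hidem hdiag).exists_surjective_fin_iff_of_card_eq_mul
    hcell_eq hcell_pos hcard

end TwoValued

end Matrix

namespace SimpleGraph

variable {V : Type*} [Fintype V] {G : SimpleGraph V} [DecidableRel G.Adj] {k : ℕ}
  {E : Matrix V V ℝ} {lam : ℝ}

theorem IsRegularOfDegree.lapMatrix_eq [DecidableEq V] (hreg : G.IsRegularOfDegree k) :
    G.lapMatrix ℝ = (k : ℝ) • 1 - G.adjMatrix ℝ := by
  rw [lapMatrix, degMatrix, ← Matrix.diagonal_one, ← Matrix.diagonal_smul]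
  congr
  ext x
  simp [hreg x]

theorem Connected.apply_eq_of_adjMatrix_mulVec_eq [DecidableEq V] (hconn : G.Connected)
    (hreg : G.IsRegularOfDegree k) {f : V → ℝ} (hf : G.adjMatrix ℝ *ᵥ f = (k : ℝ) • f)
    (x y : V) : f x = f y := by
  have : G.lapMatrix ℝ *ᵥ f = 0 := by
    rw [hreg.lapMatrix_eq, Matrix.sub_mulVec, hf, Matrix.smul_mulVec, Matrix.one_mulVec, sub_self]
  exact (lapMatrix_mulVec_eq_zero_iff_forall_reachable G).mp this x y (hconn.preconnected x y)

theorem IsRegularOfDegree.adjMatrix_mulVec_one (hreg : G.IsRegularOfDegree k) :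
    G.adjMatrix ℝ *ᵥ 1 = (k : ℝ) • 1 := by
  ext x
  simp [hreg x]

theorem Connected.ne_degree_of_adjMatrix_mul_eq_smul [DecidableEq V] (hconn : G.Connected)
    (hreg : G.IsRegularOfDegree k) (hsymm : E.IsSymm) (hAE : G.adjMatrix ℝ * E = lam • E)
    {x₁ y₁ x₂ y₂ : V} (hne : E x₁ y₁ ≠ E x₂ y₂) : lam ≠ k := by
  rintro rfl
  have hcol : ∀ j x y, E x j = E y j := fun j =>
    hconn.apply_eq_of_adjMatrix_mulVec_eq hreg <| by
      ext x
      simpa [mulVec, dotProduct, mul_apply] using congrFun (congrFun hAE x) j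
  exact hne <| calc
    E x₁ y₁ = E y₁ x₂ := (hcol y₁ x₁ x₂).trans (hsymm.apply x₂ y₁).symm
    _ = E x₂ y₂ := (hcol x₂ y₁ y₂).trans (hsymm.apply x₂ y₂)

theorem IsRegularOfDegree.sum_apply_eq_zero_of_adjMatrix_mul_eq_smul
    (hreg : G.IsRegularOfDegree k) (hsymm : E.IsSymm) (hAE : G.adjMatrix ℝ * E = lam • E)
    (hlam : lam ≠ k) (x : V) : ∑ y, E x y = 0 := by
  have hEA : E * G.adjMatrix ℝ = lam • E := by
    rw [← hsymm.eq, ← transpose_adjMatrix G, ← transpose_mul, hAE, transpose_smul]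
  have h : (k : ℝ) • (E *ᵥ 1) = lam • (E *ᵥ 1) := by
    rw [← mulVec_smul, ← hreg.adjMatrix_mulVec_one, mulVec_mulVec, hEA, smul_mulVec]
  have hzero : E *ᵥ 1 = 0 := by
    rw [← sub_eq_zero, ← sub_smul] at h
    exact (smul_eq_zero.mp h).resolve_left (sub_ne_zero.mpr (Ne.symm hlam))
  simpa [mulVec, dotProduct] using congrFun hzero x

theorem IsRegularOfDegree.sum_neighborFinset_of_two_valued (hreg : G.IsRegularOfDegree k)
    {f : V → ℝ} {p q : ℝ} (hf : ∀ y, f y = p ∨ f y = q) (x : V) :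
    ∑ y ∈ G.neighborFinset x, f y = k * q + (p - q) * #{y ∈ G.neighborFinset x | f y = p} := by
  simpa [hreg x] using Finset.sum_comp_of_forall_eq_or_eq (G.neighborFinset x) hf id

theorem IsRegularOfDegree.mul_apply_eq_card_filter_neighborFinset
    (hreg : G.IsRegularOfDegree k) (hAE : G.adjMatrix ℝ * E = lam • E) {p q : ℝ}
    (hval : ∀ x y, E x y = p ∨ E x y = q) (x z : V) :
    lam * E x z = k * q + (p - q) * #{y ∈ G.neighborFinset x | E y z = p} := by
  rw [← hreg.sum_neighborFinset_of_two_valued (fun y => hval y z), ← adjMatrix_mul_apply, hAE,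
    Matrix.smul_apply, smul_eq_mul]

theorem IsRegularOfDegree.card_filter_neighborFinset_eq_of_apply_eq
    (hreg : G.IsRegularOfDegree k) (hAE : G.adjMatrix ℝ * E = lam • E) {p q : ℝ}
    (hval : ∀ x y, E x y = p ∨ E x y = q) (hqp : q < p) {x z x' z' : V}
    (h : E x z = E x' z') :
    #{y ∈ G.neighborFinset x | E y z = p} = #{y ∈ G.neighborFinset x' | E y z' = p} := by
  have := hreg.mul_apply_eq_card_filter_neighborFinset hAE hval x z
  rw [h, hreg.mul_apply_eq_card_filter_neighborFinset hAE hval x' z'] at this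
  exact_mod_cast (mul_left_cancel₀ (sub_ne_zero.mpr hqp.ne') (add_left_cancel this)).symm

theorem IsRegularOfDegree.isIndubitable_of_two_valued (hreg : G.IsRegularOfDegree k)
    (hAE : G.adjMatrix ℝ * E = lam • E) {p q : ℝ} (hval : ∀ x y, E x y = p ∨ E x y = q)
    (hqp : q < p) (hdiag : ∀ x, E x x = p) {ι : Type*} {c : V → ι}
    (hc_surj : Function.Surjective c) (hc : ∀ x y, c x = c y ↔ E x y = p) {xq yq : V}
    (hxyq : E xq yq = q) :
    IsIndubitable G c #{y ∈ G.neighborFinset xq | E y xq = p}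
      #{y ∈ G.neighborFinset xq | E y yq = p} := by
  refine ⟨hc_surj, fun i x => ?_⟩
  obtain ⟨z, rfl⟩ := hc_surj i
  have hcell : {y | G.Adj x y ∧ c y = c z} = ↑{y ∈ G.neighborFinset x | E y z = p} := by
    ext y
    simp [hc]
  rw [hcell, Set.ncard_coe_finset, hc]
  split_ifs with hxz
  · exact hreg.card_filter_neighborFinset_eq_of_apply_eq hAE hval hqp (hxz.trans (hdiag xq).symm)
  · exact hreg.card_filter_neighborFinset_eq_of_apply_eq hAE hval hqp
      (((hval x z).resolve_left hxz).trans hxyq.symm)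

end SimpleGraph

theorem statement4_general (v k m : ℕ) (G : SimpleGraph (Fin v)) [DecidableRel G.Adj]
    (hconn : G.Connected) (hreg : G.IsRegularOfDegree k)
    (lam : ℝ) (hm : eigMult (G.adjMatrix ℝ) lam = m)
    (E : Matrix (Fin v) (Fin v) ℝ) (hE : IsSpectralIdempotent (G.adjMatrix ℝ) E lam)
    (hdim : Module.finrank ℝ (hadSpan E) = 2) :
    ∃ (c : Fin v → Fin (m + 1)) (a b : ℕ), IsIndubitable G c a b ∧
      (a : ℝ) = lam + ((k : ℝ) - lam) / ((m : ℝ) + 1) ∧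
      (b : ℝ) = ((k : ℝ) - lam) / ((m : ℝ) + 1) := by
  obtain ⟨hsymm, hidem, hAE, hrank⟩ := hE
  obtain ⟨p, q, hqp, hval, ⟨xp, yp, hxyp⟩, xq, yq, hxyq⟩ :=
    exists_two_valued_of_finrank_hadSpan_eq_two hdim
  have hlam : lam ≠ k := hconn.ne_degree_of_adjMatrix_mul_eq_smul hreg hsymm hAE
    (hxyq.trans_ne (hqp.ne.trans_eq hxyp.symm))
  have hrow := hreg.sum_apply_eq_zero_of_adjMatrix_mul_eq_smul hsymm hAE hlam
  have hdiag := apply_self_eq_of_two_valued hsymm hidem hval hqp hrow ⟨xp, yp, hxyp⟩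
  have hvq : (v : ℝ) * q = -1 := by
    simpa using card_mul_eq_neg_one hsymm hidem hval hqp hrow hdiag ⟨xq, yq, hxyq⟩
  have hvp : (v : ℝ) * p = m := by
    rw [← hm, ← hrank, ← trace_eq_rank_of_isIdempotentElem hidem, trace]
    simp [hdiag]
  obtain ⟨c, hc_surj, hc⟩ := exists_surjective_fin_iff_apply_eq hsymm hidem hval hqp hrow hdiag
    ⟨xq, yq, hxyq⟩ (by simpa using hvp)
  refine ⟨c, _, _, hreg.isIndubitable_of_two_valued hAE hval hqp hdiag hc_surj hc hxyq, ?_, ?_⟩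
  · set a := #{y ∈ G.neighborFinset xq | E y xq = p}
    have ha := hreg.mul_apply_eq_card_filter_neighborFinset hAE hval xq xq
    rw [hdiag] at ha
    field_simp
    linear_combination (lam - a) * hvp + (a - k) * hvq - v * ha
  · set b := #{y ∈ G.neighborFinset xq | E y yq = p}
    have hb := hreg.mul_apply_eq_card_filter_neighborFinset hAE hval xq yq
    rw [hxyq] at hb
    field_simp
    linear_combination -b * hvp + (b + lam - k) * hvq - v * hb

/-- Proposition gDD. Let `Γ` be a connected `k`-regular graph on `v` vertices
with an eigenvalue `λ` of multiplicity `m`, spectral idempotent `E_λ` and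
`ℰ = ⟨J, E_λ⟩∘`. If `dim ℰ = 2`, then `Γ` has a full indubitable partition corresponding to
`λ`: an indubitable partition with `m+1` cells and parameters `(a,b)` with
`a = λ + (k−λ)/(m+1)` and `b = (k−λ)/(m+1)`. -/
theorem statement4 (v k m : ℕ) (G : SimpleGraph (Fin v)) [DecidableRel G.Adj]
    (hconn : G.Connected) (hreg : G.IsRegularOfDegree k)
    (lam : ℝ) (hm : eigMult (G.adjMatrix ℝ) lam = m) (hm0 : 0 < m)
    (E : Matrix (Fin v) (Fin v) ℝ) (hE : IsSpectralIdempotent (G.adjMatrix ℝ) E lam)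
    (hdim : Module.finrank ℝ (hadSpan E) = 2) :
    ∃ (c : Fin v → Fin (m + 1)) (a b : ℕ), IsIndubitable G c a b ∧
      (a : ℝ) = lam + ((k : ℝ) - lam) / ((m : ℝ) + 1) ∧
      (b : ℝ) = ((k : ℝ) - lam) / ((m : ℝ) + 1) :=
  statement4_general v k m G hconn hreg lam hm E hE hdim
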